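/- Let α be a compactly supported centered Borel probability measure on ℝ^D, β a compactly supported centered Borel probability measure on ℝ^E, and ε > 0. Define D_ε(Γ) = ‖Γ‖_F² + (1/8)·OT_ε^Γ(α,β) for Γ ∈ ℝ^{D×E}. Suppose Γ ∈ ℝ^{D×E}, π' ∈ Π(α,β) attains the infimum defining OT_ε^Γ(α,β), and set Γ' = ∫ x yᵀ dπ'(x,y). Then the alternating-minimization descent inequality holds: D_ε(Γ) − D_ε(Γ') ≥ ‖Γ − Γ'‖_F². -/

import Mathlib

open MeasureTheory Classical

/-- Kullback–Leibler divergence, with value `⊤` when `π` is not absolutely continuous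
with respect to `μ` or the log-likelihood ratio is not integrable. -/
noncomputable def klE {Z : Type*} [MeasurableSpace Z] (π μ : Measure Z) : EReal :=
  if π ≪ μ ∧ Integrable (llr π μ) π then ((∫ z, llr π μ z ∂π : ℝ) : EReal) else ⊤

/-- The set of couplings between `α` and `β`. -/
def couplings {X Y : Type*} [MeasurableSpace X] [MeasurableSpace Y]
    (α : Measure X) (β : Measure Y) : Set (Measure (X × Y)) :=
  {π | π.map Prod.fst = α ∧ π.map Prod.snd = β}

/-- The entropic OT cost `OT_ε^Γ(α,β)` for the cost
`c_Γ(x,y) = -16 ⟨Γ, x yᵀ⟩_F - 4 ‖x‖² ‖y‖²`. -/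
noncomputable def otGammaM {D E : ℕ}
    (α : Measure (EuclideanSpace ℝ (Fin D))) (β : Measure (EuclideanSpace ℝ (Fin E)))
    (ε : ℝ) (Γ : Matrix (Fin D) (Fin E) ℝ) : EReal :=
  ⨅ π ∈ couplings α β,
    ((∫ p, (-16 * ∑ i, ∑ j, Γ i j * (p.1 i * p.2 j)
        - 4 * ‖p.1‖ ^ 2 * ‖p.2‖ ^ 2) ∂π : ℝ) : EReal)
      + (ε : EReal) * klE π (α.prod β)

/-- The dual function `D_ε(Γ) = ‖Γ‖_F² + (1/8) OT_ε^Γ(α,β)`. -/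
noncomputable def dualFun {D E : ℕ}
    (α : Measure (EuclideanSpace ℝ (Fin D))) (β : Measure (EuclideanSpace ℝ (Fin E)))
    (ε : ℝ) (Γ : Matrix (Fin D) (Fin E) ℝ) : ℝ :=
  (∑ i, ∑ j, (Γ i j) ^ 2) + (1 / 8) * (otGammaM α β ε Γ).toReal

/-! The plan `π'`, optimal for `Γ`, is admissible in the infimum defining `OT_ε^{Γ'}`, and the cost
is affine in `Γ` with `∫ ⟨Γ, x yᵀ⟩ dπ' = ⟨Γ, Γ'⟩`. Hence
`D_ε(Γ) - D_ε(Γ') ≥ ‖Γ‖² - ‖Γ'‖² - 2 ⟨Γ - Γ', Γ'⟩ = ‖Γ - Γ'‖²`.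
Compact supports keep every integral finite and `OT_ε^{Γ'}` above `⊥`, while `ε > 0` makes
`KL(π' ‖ α ⊗ β)` finite, so the comparison in `EReal` survives `EReal.toReal`. -/

section KL

variable {Z : Type*} [MeasurableSpace Z]

lemma klE_ne_bot (π μ : Measure Z) : klE π μ ≠ ⊥ := by
  unfold klE
  split_ifs
  · exact EReal.coe_ne_bot _
  · exact top_ne_bot

lemma klE_nonneg (π μ : Measure Z) [IsProbabilityMeasure π] [IsProbabilityMeasure μ] :
    0 ≤ klE π μ := by
  unfold klE
  split_ifs with h
  · have := InformationTheory.integral_llr_add_sub_measure_univ_nonneg h.1 h.2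
    simp only [probReal_univ, add_sub_cancel_right] at this
    exact_mod_cast this
  · exact le_top

lemma klE_self (μ : Measure Z) [SigmaFinite μ] : klE μ μ = 0 := by
  unfold klE
  rw [if_pos ⟨Measure.AbsolutelyContinuous.rfl,
    (integrable_congr (llr_self μ)).mpr (integrable_zero _ _ _)⟩, integral_congr_ae (llr_self μ)]
  simp

end KL

section Couplings

variable {X Y : Type*} [MeasurableSpace X] [MeasurableSpace Y] {α : Measure X} {β : Measure Y}
  {π : Measure (X × Y)}

lemma isProbabilityMeasure_of_mem_couplings [IsProbabilityMeasure α] (hπ : π ∈ couplings α β) :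
    IsProbabilityMeasure π := by
  have : IsProbabilityMeasure (π.map Prod.fst) := hπ.1 ▸ ‹_›
  exact Measure.isProbabilityMeasure_of_map Prod.fst

lemma prod_mem_couplings [IsProbabilityMeasure α] [IsProbabilityMeasure β] :
    α.prod β ∈ couplings α β :=
  ⟨Measure.map_fst_prod.trans (by simp), Measure.map_snd_prod.trans (by simp)⟩

lemma ae_mem_prod_of_mem_couplings (hπ : π ∈ couplings α β) {s : Set X} {t : Set Y}
    (hs : α sᶜ = 0) (ht : β tᶜ = 0) : ∀ᵐ p ∂π, p ∈ s ×ˢ t := by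
  have h₁ : ∀ᵐ p ∂π, p.1 ∈ s := ae_of_ae_map measurable_fst.aemeasurable (hπ.1 ▸ hs)
  have h₂ : ∀ᵐ p ∂π, p.2 ∈ t := ae_of_ae_map measurable_snd.aemeasurable (hπ.2 ▸ ht)
  filter_upwards [h₁, h₂] with p hp₁ hp₂ using ⟨hp₁, hp₂⟩

end Couplings

lemma Continuous.integrable_of_ae_mem_isCompact {X : Type*} [TopologicalSpace X] [T2Space X]
    [MeasurableSpace X] [OpensMeasurableSpace X] {μ : Measure X} [IsFiniteMeasure μ]
    {K : Set X} (hK : IsCompact K) (hμK : ∀ᵐ x ∂μ, x ∈ K) {f : X → ℝ} (hf : Continuous f) :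
    Integrable f μ := by
  rw [← Measure.restrict_eq_self_of_ae_mem hμK]
  exact hf.continuousOn.integrableOn_compact hK

section EntropicOT

variable {D E : ℕ}

noncomputable def otCost (Γ : Matrix (Fin D) (Fin E) ℝ)
    (p : EuclideanSpace ℝ (Fin D) × EuclideanSpace ℝ (Fin E)) : ℝ :=
  -16 * ∑ i, ∑ j, Γ i j * (p.1 i * p.2 j) - 4 * ‖p.1‖ ^ 2 * ‖p.2‖ ^ 2

lemma continuous_otCost (Γ : Matrix (Fin D) (Fin E) ℝ) : Continuous (otCost Γ) := by
  unfold otCost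
  fun_prop

lemma integral_otCost {π : Measure (EuclideanSpace ℝ (Fin D) × EuclideanSpace ℝ (Fin E))}
    (hxy : ∀ i j, Integrable (fun p => p.1 i * p.2 j) π)
    (hnorm : Integrable (fun p => ‖p.1‖ ^ 2 * ‖p.2‖ ^ 2) π) (Γ : Matrix (Fin D) (Fin E) ℝ) :
    ∫ p, otCost Γ p ∂π = -16 * ∑ i, ∑ j, Γ i j * ∫ p, p.1 i * p.2 j ∂π
      - 4 * ∫ p, ‖p.1‖ ^ 2 * ‖p.2‖ ^ 2 ∂π := by
  have hrow : ∀ i, Integrable (fun p => ∑ j, Γ i j * (p.1 i * p.2 j)) π :=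
    fun i => integrable_finsetSum _ fun j _ => (hxy i j).const_mul _
  unfold otCost
  simp_rw [mul_assoc (4 : ℝ)]
  rw [integral_sub ((integrable_finsetSum _ fun i _ => hrow i).const_mul _) (hnorm.const_mul _),
    integral_const_mul, integral_const_mul, integral_finsetSum _ fun i _ => hrow i]
  simp_rw [integral_finsetSum _ fun j _ => (hxy _ j).const_mul _, integral_const_mul]

variable (α : Measure (EuclideanSpace ℝ (Fin D))) (β : Measure (EuclideanSpace ℝ (Fin E))) (ε : ℝ)

noncomputable def entropicObjective (Γ : Matrix (Fin D) (Fin E) ℝ)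
    (π : Measure (EuclideanSpace ℝ (Fin D) × EuclideanSpace ℝ (Fin E))) : EReal :=
  ((∫ p, otCost Γ p ∂π : ℝ) : EReal) + (ε : EReal) * klE π (α.prod β)

lemma otGammaM_le_entropicObjective {Γ : Matrix (Fin D) (Fin E) ℝ}
    {π : Measure (EuclideanSpace ℝ (Fin D) × EuclideanSpace ℝ (Fin E))}
    (hπ : π ∈ couplings α β) : otGammaM α β ε Γ ≤ entropicObjective α β ε Γ π :=
  iInf₂_le π hπ

lemma otGammaM_ne_top [IsProbabilityMeasure α] [IsProbabilityMeasure β]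
    (Γ : Matrix (Fin D) (Fin E) ℝ) : otGammaM α β ε Γ ≠ ⊤ := by
  refine ne_top_of_le_ne_top ?_ (otGammaM_le_entropicObjective α β ε prod_mem_couplings)
  rw [entropicObjective, klE_self, mul_zero, add_zero]
  exact EReal.coe_ne_top _

lemma otGammaM_ne_bot [IsProbabilityMeasure α] [IsProbabilityMeasure β]
    {KX : Set (EuclideanSpace ℝ (Fin D))} {KY : Set (EuclideanSpace ℝ (Fin E))}
    (hKX : IsCompact KX) (hKY : IsCompact KY) (hαK : α KXᶜ = 0) (hβK : β KYᶜ = 0)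
    (hε : 0 ≤ ε) (Γ : Matrix (Fin D) (Fin E) ℝ) : otGammaM α β ε Γ ≠ ⊥ := by
  obtain ⟨C, hC⟩ := (hKX.prod hKY).exists_bound_of_continuousOn (continuous_otCost Γ).continuousOn
  refine ne_bot_of_le_ne_bot (EReal.coe_ne_bot (-C)) (le_iInf₂ fun π hπ => ?_)
  have := isProbabilityMeasure_of_mem_couplings hπ
  have hbound : ‖∫ p, otCost Γ p ∂π‖ ≤ C := by
    simpa using norm_integral_le_of_norm_le_const
      ((ae_mem_prod_of_mem_couplings hπ hαK hβK).mono hC)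
  have hkl : (0 : EReal) ≤ (ε : EReal) * klE π (α.prod β) :=
    mul_nonneg (EReal.coe_nonneg.mpr hε) (klE_nonneg _ _)
  calc ((-C : ℝ) : EReal) ≤ ((∫ p, otCost Γ p ∂π : ℝ) : EReal) :=
        EReal.coe_le_coe_iff.mpr (neg_le_of_abs_le hbound)
    _ ≤ _ := le_add_of_nonneg_right hkl

variable {α β ε}

lemma klE_ne_top_of_entropicObjective_eq_otGammaM [IsProbabilityMeasure α]
    [IsProbabilityMeasure β] (hε : 0 < ε) {Γ : Matrix (Fin D) (Fin E) ℝ}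
    {π : Measure (EuclideanSpace ℝ (Fin D) × EuclideanSpace ℝ (Fin E))}
    (hopt : entropicObjective α β ε Γ π = otGammaM α β ε Γ) : klE π (α.prod β) ≠ ⊤ := by
  intro htop
  rw [entropicObjective, htop, EReal.mul_top_of_pos (EReal.coe_pos.mpr hε),
    EReal.add_top_of_ne_bot (EReal.coe_ne_bot _)] at hopt
  exact otGammaM_ne_top α β ε Γ hopt.symm

lemma dualFun_eq_of_entropicObjective_eq_otGammaM {Γ : Matrix (Fin D) (Fin E) ℝ}
    {π : Measure (EuclideanSpace ℝ (Fin D) × EuclideanSpace ℝ (Fin E))} {K : ℝ}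
    (hK : klE π (α.prod β) = K) (hopt : entropicObjective α β ε Γ π = otGammaM α β ε Γ) :
    dualFun α β ε Γ = ∑ i, ∑ j, Γ i j ^ 2 + 1 / 8 * (∫ p, otCost Γ p ∂π + ε * K) := by
  rw [dualFun, ← hopt, entropicObjective, hK, ← EReal.coe_mul, ← EReal.coe_add, EReal.toReal_coe]

lemma dualFun_le_of_mem_couplings {Γ : Matrix (Fin D) (Fin E) ℝ}
    {π : Measure (EuclideanSpace ℝ (Fin D) × EuclideanSpace ℝ (Fin E))} {K : ℝ}
    (hπ : π ∈ couplings α β) (hK : klE π (α.prod β) = K) (hbot : otGammaM α β ε Γ ≠ ⊥) :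
    dualFun α β ε Γ ≤ ∑ i, ∑ j, Γ i j ^ 2 + 1 / 8 * (∫ p, otCost Γ p ∂π + ε * K) := by
  have hle := otGammaM_le_entropicObjective α β ε (Γ := Γ) hπ
  rw [entropicObjective, hK, ← EReal.coe_mul, ← EReal.coe_add] at hle
  have := EReal.toReal_le_toReal hle hbot (EReal.coe_ne_top _)
  rw [EReal.toReal_coe] at this
  rw [dualFun]
  linarith

end EntropicOT

theorem alternating_minimization_descent_general {D E : ℕ}
    (α : Measure (EuclideanSpace ℝ (Fin D))) (β : Measure (EuclideanSpace ℝ (Fin E)))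
    [IsProbabilityMeasure α] [IsProbabilityMeasure β]
    (KX : Set (EuclideanSpace ℝ (Fin D))) (KY : Set (EuclideanSpace ℝ (Fin E)))
    (hKX : IsCompact KX) (hKY : IsCompact KY) (hαK : α KXᶜ = 0) (hβK : β KYᶜ = 0)
    (ε : ℝ) (hε : 0 < ε)
    (Γ : Matrix (Fin D) (Fin E) ℝ)
    (π' : Measure (EuclideanSpace ℝ (Fin D) × EuclideanSpace ℝ (Fin E)))
    (hπ' : π' ∈ couplings α β)
    (hopt : ((∫ p, (-16 * ∑ i, ∑ j, Γ i j * (p.1 i * p.2 j)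
          - 4 * ‖p.1‖ ^ 2 * ‖p.2‖ ^ 2) ∂π' : ℝ) : EReal)
        + (ε : EReal) * klE π' (α.prod β) = otGammaM α β ε Γ)
    (Γ' : Matrix (Fin D) (Fin E) ℝ)
    (hΓ' : Γ' = Matrix.of fun i j => ∫ p, p.1 i * p.2 j ∂π') :
    (∑ i, ∑ j, (Γ i j - Γ' i j) ^ 2) ≤ dualFun α β ε Γ - dualFun α β ε Γ' := by
  change entropicObjective α β ε Γ π' = _ at hopt
  have := isProbabilityMeasure_of_mem_couplings hπ'
  have hint : ∀ f, Continuous f → Integrable f π' := fun f hf =>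
    hf.integrable_of_ae_mem_isCompact (hKX.prod hKY) (ae_mem_prod_of_mem_couplings hπ' hαK hβK)
  obtain ⟨K, hK⟩ : ∃ K : ℝ, klE π' (α.prod β) = K :=
    ⟨_, (EReal.coe_toReal (klE_ne_top_of_entropicObjective_eq_otGammaM hε hopt)
      (klE_ne_bot _ _)).symm⟩
  have hΓ := dualFun_eq_of_entropicObjective_eq_otGammaM hK hopt
  have hΓ'le := dualFun_le_of_mem_couplings (Γ := Γ') hπ' hK
    (otGammaM_ne_bot α β ε hKX hKY hαK hβK hε.le Γ')
  rw [integral_otCost (fun i j => hint _ (by fun_prop)) (hint _ (by fun_prop))] at hΓ hΓ'le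
  have hentry : ∀ i j, ∫ p, p.1 i * p.2 j ∂π' = Γ' i j := fun i j => by rw [hΓ']; rfl
  simp only [hentry] at hΓ hΓ'le
  have hexpand : ∑ i, ∑ j, (Γ i j - Γ' i j) ^ 2 = ∑ i, ∑ j, Γ i j ^ 2 - ∑ i, ∑ j, Γ' i j ^ 2
      - 2 * ∑ i, ∑ j, Γ i j * Γ' i j + 2 * ∑ i, ∑ j, Γ' i j * Γ' i j := by
    simp only [Finset.mul_sum, ← Finset.sum_sub_distrib, ← Finset.sum_add_distrib]
    exact Finset.sum_congr rfl fun i _ => Finset.sum_congr rfl fun j _ => by ring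
  linarith

/-- the alternating-minimization descent inequality
`D_ε(Γ) - D_ε(Γ') ≥ ‖Γ - Γ'‖_F²` where `Γ' = ∫ x yᵀ dπ'` and `π'` is an optimal
entropic plan for the cost `c_Γ`. -/
theorem alternating_minimization_descent {D E : ℕ}
    (α : Measure (EuclideanSpace ℝ (Fin D))) (β : Measure (EuclideanSpace ℝ (Fin E)))
    [IsProbabilityMeasure α] [IsProbabilityMeasure β]
    (KX : Set (EuclideanSpace ℝ (Fin D))) (KY : Set (EuclideanSpace ℝ (Fin E)))
    (hKX : IsCompact KX) (hKY : IsCompact KY) (hαK : α KXᶜ = 0) (hβK : β KYᶜ = 0)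
    (hαcentered : ∫ x, x ∂α = 0) (hβcentered : ∫ y, y ∂β = 0)
    (ε : ℝ) (hε : 0 < ε)
    (Γ : Matrix (Fin D) (Fin E) ℝ)
    (π' : Measure (EuclideanSpace ℝ (Fin D) × EuclideanSpace ℝ (Fin E)))
    (hπ' : π' ∈ couplings α β)
    (hopt : ((∫ p, (-16 * ∑ i, ∑ j, Γ i j * (p.1 i * p.2 j)
          - 4 * ‖p.1‖ ^ 2 * ‖p.2‖ ^ 2) ∂π' : ℝ) : EReal)
        + (ε : EReal) * klE π' (α.prod β) = otGammaM α β ε Γ)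
    (Γ' : Matrix (Fin D) (Fin E) ℝ)
    (hΓ' : Γ' = Matrix.of fun i j => ∫ p, p.1 i * p.2 j ∂π') :
    (∑ i, ∑ j, (Γ i j - Γ' i j) ^ 2) ≤ dualFun α β ε Γ - dualFun α β ε Γ' :=
  alternating_minimization_descent_general α β KX KY hKX hKY hαK hβK ε hε Γ π' hπ' hopt Γ' hΓ'
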